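/- Let K be a field of characteristic zero, X a finite connected poset, u_0 ∈ X, and σ : X²_< → K a map constant on chains and constant on cycles in X. Then there exists a unique diagonality-preserving φ ∈ Δ(I(X,K)) such that φ(e_{xy}) = σ(x,y)e_{xy} for all x < y and φ(e_x)(u_0,u_0) = 0 for all x ∈ X. -/

import Mathlib

open scoped Classical

attribute [local instance 100] LieRing.ofAssociativeRing

noncomputable section

/-- A `1/2`-derivation of a Lie algebra `L` over `K`:
`φ ⁅a, b⁆ = (1/2) • (⁅φ a, b⁆ + ⁅a, φ b⁆)`. -/
def IsHalfDerivation (K L : Type*) [Field K] [LieRing L] [LieAlgebra K L]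
    (φ : L →ₗ[K] L) : Prop :=
  ∀ a b : L, φ ⁅a, b⁆ = (2⁻¹ : K) • (⁅φ a, b⁆ + ⁅a, φ b⁆)

/-- The standard basis element `e_{xy}` (for `x ≤ y`) of the incidence algebra. -/
def eI (K : Type*) {X : Type*} [Field K] [PartialOrder X] [DecidableEq X]
    (x y : X) (h : x ≤ y) : IncidenceAlgebra K X :=
  ⟨fun u v => if x = u ∧ y = v then (1 : K) else 0, by
    intro u v huv
    show (if x = u ∧ y = v then (1 : K) else 0) = 0
    rw [if_neg]; rintro ⟨rfl, rfl⟩; exact huv h⟩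

/-- Diagonal elements of the incidence algebra (the subspace `D(X,K)`). -/
def IsDiagI {K X : Type*} [Zero K] [LE X] (f : IncidenceAlgebra K X) : Prop :=
  ∀ x y : X, x ≠ y → f x y = 0

/-- A walk `u 0, u 1, …, u m` in a poset: consecutive vertices are comparable and
cover one another (`l(x,y) = 1`). -/
def IsWalkOn {X : Type*} [PartialOrder X] (u : ℕ → X) (m : ℕ) : Prop :=
  ∀ i < m, u i ⋖ u (i + 1) ∨ u (i + 1) ⋖ u i

/-- A poset is connected if any two of its elements are joined by a walk. -/
def ConnectedPoset (X : Type*) [PartialOrder X] : Prop :=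
  ∀ x y : X, ∃ (u : ℕ → X) (m : ℕ), IsWalkOn u m ∧ u 0 = x ∧ u m = y

/-- The set `X²_<` of pairs `(x, y)` with `x < y`. -/
def LtPairs (X : Type*) [PartialOrder X] : Type _ := {p : X × X // p.1 < p.2}

/-- The value of `σ : X²_< → K` at `(x, y)`, extended by `0` to all pairs. -/
def sigVal {K X : Type*} [Field K] [PartialOrder X] (σ : LtPairs X → K) (x y : X) : K :=
  if h : x < y then σ ⟨(x, y), h⟩ else 0

/-- `s⁺_{σ,Γ}(x) = Σ_{x = u i < u (i+1)} σ (x, u (i+1))`. -/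
def sP {K X : Type*} [Field K] [PartialOrder X] (σ : LtPairs X → K)
    (u : ℕ → X) (m : ℕ) (x : X) : K :=
  ∑ i ∈ Finset.range m, if x = u i then sigVal σ x (u (i + 1)) else 0

/-- `s⁻_{σ,Γ}(x) = Σ_{u i > u (i+1) = x} σ (x, u i)`. -/
def sM {K X : Type*} [Field K] [PartialOrder X] (σ : LtPairs X → K)
    (u : ℕ → X) (m : ℕ) (x : X) : K :=
  ∑ i ∈ Finset.range m, if x = u (i + 1) then sigVal σ x (u i) else 0

/-- `t⁺_{σ,Γ}(x) = Σ_{x = u i > u (i+1)} σ (u (i+1), x)`. -/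
def tP {K X : Type*} [Field K] [PartialOrder X] (σ : LtPairs X → K)
    (u : ℕ → X) (m : ℕ) (x : X) : K :=
  ∑ i ∈ Finset.range m, if x = u i then sigVal σ (u (i + 1)) x else 0

/-- `t⁻_{σ,Γ}(x) = Σ_{u i < u (i+1) = x} σ (u i, x)`. -/
def tM {K X : Type*} [Field K] [PartialOrder X] (σ : LtPairs X → K)
    (u : ℕ → X) (m : ℕ) (x : X) : K :=
  ∑ i ∈ Finset.range m, if x = u (i + 1) then sigVal σ (u i) x else 0

/-- A cycle: a closed walk `u 0, …, u m = u 0` with `m ≥ 4` such that repeated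
vertices occur only at the pair of indices `{0, m}`. -/
def IsCycleW {X : Type*} [PartialOrder X] (u : ℕ → X) (m : ℕ) : Prop :=
  IsWalkOn u m ∧ u m = u 0 ∧ 4 ≤ m ∧
    ∀ i ≤ m, ∀ j ≤ m, i ≠ j → u i = u j → (i = 0 ∧ j = m) ∨ (i = m ∧ j = 0)

/-- `σ` is constant on cycles. -/
def ConstOnCycles {K X : Type*} [Field K] [PartialOrder X] (σ : LtPairs X → K) : Prop :=
  ∀ (u : ℕ → X) (m : ℕ), IsCycleW u m →
    ∃ k : K, ∀ i < m,
      (∀ h : u i < u (i + 1), σ ⟨(u i, u (i + 1)), h⟩ = k) ∧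
      (∀ h : u (i + 1) < u i, σ ⟨(u (i + 1), u i), h⟩ = k)

/-- `σ` is constant on chains: `σ (x, y) = σ (u, v)` whenever `x < y` and `u < v` all
belong to a common chain, i.e. `{x, y, u, v}` is pairwise comparable. -/
def ConstOnChains {K X : Type*} [Field K] [PartialOrder X] (σ : LtPairs X → K) : Prop :=
  ∀ (x y u v : X) (h1 : x < y) (h2 : u < v),
    (x ≤ u ∨ u ≤ x) → (x ≤ v ∨ v ≤ x) → (y ≤ u ∨ u ≤ y) → (y ≤ v ∨ v ≤ y) →
      σ ⟨(x, y), h1⟩ = σ ⟨(u, v), h2⟩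

/-!
A `1/2`-derivation `φ` as in the theorem is prescribed off the diagonal, and evaluating
`φ ⁅e_w, e_xy⁆ = ½ (⁅φ e_w, e_xy⁆ + ⁅e_w, φ e_xy⁆)` at `(x, y)` shows that `z ↦ φ(e_w)(z, z)`
is a potential of the indicator `δ_w` of `w`: its difference across `x < y` is `σ(x, y)` times
that of `δ_w`. Since `σ` is constant on chains it suffices to prescribe these differences on
covering pairs, i.e. on the edges of the Hasse diagram, and their sum around every closed walk
vanishes: a closed walk splits at a repeated vertex into shorter closed walks, the Hasse diagram
has no triangles, and around a cycle `σ` is constant, so the sum telescopes. Connectedness then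
yields a potential, unique once normalised at `u0` and hence linear in the data. Conversely,
constancy on chains makes the map so defined a `1/2`-derivation.
-/

open Finset

section Walks

variable {X A : Type*} [AddCommGroup A]

def walkSum (E : X → X → A) (u : ℕ → X) (m : ℕ) : A :=
  ∑ i ∈ range m, E (u i) (u (i + 1))

def walkAppend (p : ℕ → X) (mp : ℕ) (q : ℕ → X) : ℕ → X :=
  fun t => if t ≤ mp then p t else q (t - mp)

def walkReverse (u : ℕ → X) (m : ℕ) : ℕ → X :=
  fun t => u (m - t)

lemma walkAppend_of_le {p q : ℕ → X} {mp t : ℕ} (ht : t ≤ mp) :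
    walkAppend p mp q t = p t :=
  if_pos ht

lemma walkAppend_add {p q : ℕ → X} {mp : ℕ} (h : p mp = q 0) (t : ℕ) :
    walkAppend p mp q (mp + t) = q t := by
  rcases Nat.eq_zero_or_pos t with rfl | ht
  · exact (walkAppend_of_le le_rfl).trans h
  · rw [walkAppend, if_neg (by omega), Nat.add_sub_cancel_left]

lemma walkSum_add (E : X → X → A) (u : ℕ → X) (a b : ℕ) :
    walkSum E u (a + b) = walkSum E u a + walkSum E (fun t => u (a + t)) b :=
  sum_range_add _ a b

lemma walkSum_append (E : X → X → A) {p q : ℕ → X} {mp : ℕ} (h : p mp = q 0) (mq : ℕ) :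
    walkSum E (walkAppend p mp q) (mp + mq) = walkSum E p mp + walkSum E q mq := by
  rw [walkSum_add]
  congr 1
  · refine sum_congr rfl fun t ht => ?_
    have ht := mem_range.1 ht
    rw [walkAppend_of_le ht.le, walkAppend_of_le ht]
  · simp only [walkAppend_add h]

lemma walkSum_reverse {E : X → X → A} (hE : ∀ a b, E a b = -E b a) (u : ℕ → X) (m : ℕ) :
    walkSum E (walkReverse u m) m = -walkSum E u m := by
  rw [walkSum, walkSum, ← sum_range_reflect, ← sum_neg_distrib]
  refine sum_congr rfl fun t ht => ?_
  have ht := mem_range.1 ht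
  rw [walkReverse, walkReverse, hE, show m - (m - 1 - t + 1) = t by omega,
    show m - (m - 1 - t) = t + 1 by omega]

variable [PartialOrder X]

lemma IsWalkOn.shift {u : ℕ → X} {m a b : ℕ} (hu : IsWalkOn u m) (hab : a + b ≤ m) :
    IsWalkOn (fun t => u (a + t)) b :=
  fun i hi => hu (a + i) (by omega)

lemma IsWalkOn.mono {u : ℕ → X} {m n : ℕ} (hu : IsWalkOn u m) (hnm : n ≤ m) : IsWalkOn u n :=
  fun i hi => hu i (by omega)

lemma IsWalkOn.append {p q : ℕ → X} {mp mq : ℕ} (hp : IsWalkOn p mp) (hq : IsWalkOn q mq)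
    (h : p mp = q 0) : IsWalkOn (walkAppend p mp q) (mp + mq) := by
  intro i hi
  rcases lt_or_ge i mp with hi' | hi'
  · rw [walkAppend_of_le hi'.le, walkAppend_of_le hi']
    exact hp i hi'
  · obtain ⟨t, rfl⟩ := Nat.exists_eq_add_of_le hi'
    rw [walkAppend_add h, add_assoc, walkAppend_add h]
    exact hq t (by omega)

lemma IsWalkOn.reverse {u : ℕ → X} {m : ℕ} (hu : IsWalkOn u m) :
    IsWalkOn (walkReverse u m) m := by
  intro i hi
  have h := hu (m - 1 - i) (by omega)
  rw [show m - 1 - i + 1 = m - i by omega] at h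
  rw [walkReverse, walkReverse, show m - (i + 1) = m - 1 - i by omega]
  exact h.symm

lemma not_covBy_triangle {a b c : X} (hab : a ⋖ b ∨ b ⋖ a) (hbc : b ⋖ c ∨ c ⋖ b)
    (hca : c ⋖ a ∨ a ⋖ c) : False := by
  rcases hab with h1 | h1 <;> rcases hbc with h2 | h2 <;> rcases hca with h3 | h3 <;>
    first
    | exact lt_irrefl _ (h1.lt.trans (h2.lt.trans h3.lt))
    | exact lt_irrefl _ (h3.lt.trans (h2.lt.trans h1.lt))
    | exact h1.2 h3.lt h2.lt | exact h1.2 h2.lt h3.lt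
    | exact h2.2 h1.lt h3.lt | exact h2.2 h3.lt h1.lt
    | exact h3.2 h1.lt h2.lt | exact h3.2 h2.lt h1.lt

variable {E : X → X → A}

lemma walkSum_eq_zero_of_closed_of_le_three (hE : ∀ a b, E a b = -E b a) {u : ℕ → X} {m : ℕ}
    (hu : IsWalkOn u m) (hcl : u m = u 0) (hm : m ≤ 3) : walkSum E u m = 0 := by
  interval_cases m
  · rfl
  · exact ((hu 0 one_pos).elim (fun h => h.ne hcl.symm) (fun h => h.ne hcl)).elim
  · rw [walkSum, sum_range_succ, sum_range_one, hcl, hE, neg_add_cancel]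
  · exact (not_covBy_triangle (hu 0 (by norm_num)) (hu 1 (by norm_num))
      (hcl ▸ hu 2 (by norm_num))).elim

theorem walkSum_eq_zero_of_closed (hE : ∀ a b, E a b = -E b a)
    (hcyc : ∀ u m, IsCycleW u m → walkSum E u m = 0) {u : ℕ → X} {m : ℕ}
    (hu : IsWalkOn u m) (hcl : u m = u 0) : walkSum E u m = 0 := by
  induction m using Nat.strong_induction_on generalizing u with
  | _ m ih =>
  by_cases hm : m ≤ 3
  · exact walkSum_eq_zero_of_closed_of_le_three hE hu hcl hm
  by_cases hsimple : ∀ i ≤ m, ∀ j ≤ m, i ≠ j → u i = u j → (i = 0 ∧ j = m) ∨ (i = m ∧ j = 0)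
  · exact hcyc u m ⟨hu, hcl, by omega, hsimple⟩
  -- split the closed walk at a repeated vertex `u i = u (i + l)` into two shorter closed walks
  obtain ⟨i, l, k, rfl, hl, hik, hrep⟩ :
      ∃ i l k, m = i + l + k ∧ 0 < l ∧ 0 < i + k ∧ u i = u (i + l) := by
    push Not at hsimple
    obtain ⟨i, hi, j, hj, hij, hrep, hne⟩ := hsimple
    rcases lt_or_gt_of_ne hij with hij | hij
    · exact ⟨i, j - i, m - j, by omega, by omega, by omega, by rw [hrep]; congr 1; omega⟩
    · exact ⟨j, i - j, m - i, by omega, by omega, by omega, by rw [← hrep]; congr 1; omega⟩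
  have hloop := ih l (by omega) (hu.shift (by omega)) hrep.symm
  have hout := ih (i + k) (by omega) ((hu.mono (by omega)).append (hu.shift le_rfl) hrep)
    (by rw [walkAppend_add hrep, walkAppend_of_le (Nat.zero_le i), hcl])
  rw [walkSum_append E hrep] at hout
  rw [walkSum_add, walkSum_add, hloop, add_zero, hout]

theorem walkSum_eq_of_endpoints (hE : ∀ a b, E a b = -E b a)
    (hcyc : ∀ u m, IsCycleW u m → walkSum E u m = 0) {p q : ℕ → X} {mp mq : ℕ}
    (hp : IsWalkOn p mp) (hq : IsWalkOn q mq) (h0 : p 0 = q 0) (h1 : p mp = q mq) :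
    walkSum E p mp = walkSum E q mq := by
  have hjoin : p mp = walkReverse q mq 0 := by rw [walkReverse, Nat.sub_zero, h1]
  have hclosed := walkSum_eq_zero_of_closed hE hcyc (hp.append hq.reverse hjoin)
    (by rw [walkAppend_add hjoin, walkAppend_of_le (Nat.zero_le mp), walkReverse,
      Nat.sub_self, h0])
  rwa [walkSum_append E hjoin, walkSum_reverse hE, add_neg_eq_zero] at hclosed

theorem exists_potential_of_walkSum (hconn : ConnectedPoset X) (u0 : X)
    (hE : ∀ a b, E a b = -E b a) (hcyc : ∀ u m, IsCycleW u m → walkSum E u m = 0) :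
    ∃ p : X → A, p u0 = 0 ∧ ∀ a b, a ⋖ b → p a - p b = E a b := by
  choose W M hW hW0 hWm using fun z => hconn z u0
  have hnil : IsWalkOn (fun _ => u0) 0 := fun i hi => absurd hi (Nat.not_lt_zero i)
  refine ⟨fun z => walkSum E (W z) (M z), ?_, fun a b hab => ?_⟩
  · exact walkSum_eq_of_endpoints hE hcyc (hW u0) hnil (hW0 u0) (hWm u0)
  · let step : ℕ → X := fun t => if t = 0 then a else b
    have hstep : IsWalkOn step 1 := fun i hi => by
      obtain rfl : i = 0 := by omega
      exact Or.inl hab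
    have hjoin : step 1 = W b 0 := (hW0 b).symm
    have h := walkSum_eq_of_endpoints hE hcyc (hW a) (hstep.append (hW b) hjoin)
      (hW0 a) (by rw [walkAppend_add hjoin, hWm, hWm])
    show walkSum E (W a) (M a) - walkSum E (W b) (M b) = E a b
    rw [h, walkSum_append E hjoin]
    simp [walkSum, step]

end Walks

section Potential

variable {K X : Type*} [Field K] [PartialOrder X] {σ : LtPairs X → K}

lemma sigVal_of_lt {x y : X} (h : x < y) : sigVal σ x y = σ ⟨(x, y), h⟩ := dif_pos h

lemma sigVal_of_not_lt {x y : X} (h : ¬x < y) : sigVal σ x y = 0 := dif_neg h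

lemma ConstOnChains.sigVal_left (hchain : ConstOnChains σ) {x y z : X} (hxz : x < z)
    (hzy : z ≤ y) : sigVal σ x z = sigVal σ x y := by
  rw [sigVal_of_lt hxz, sigVal_of_lt (hxz.trans_le hzy)]
  exact hchain _ _ _ _ _ _ (Or.inl le_rfl) (Or.inl (hxz.le.trans hzy)) (Or.inr hxz.le)
    (Or.inl hzy)

lemma ConstOnChains.sigVal_right (hchain : ConstOnChains σ) {x y z : X} (hxz : x ≤ z)
    (hzy : z < y) : sigVal σ z y = sigVal σ x y := by
  rw [sigVal_of_lt hzy, sigVal_of_lt (hxz.trans_lt hzy)]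
  exact hchain _ _ _ _ _ _ (Or.inr hxz) (Or.inl hzy.le) (Or.inr (hxz.trans hzy.le))
    (Or.inl le_rfl)

/-- For `φ` as in the theorem, the diagonal of `φ(e_w)` is a potential of the indicator of `w`. -/
def IsPotential (σ : LtPairs X → K) (d p : X → K) : Prop :=
  ∀ x y, x < y → p x - p y = sigVal σ x y * (d x - d y)

lemma IsPotential.add {d d' p p' : X → K} (hp : IsPotential σ d p) (hp' : IsPotential σ d' p') :
    IsPotential σ (d + d') (p + p') := by
  intro x y hxy
  simp only [Pi.add_apply]
  linear_combination hp x y hxy + hp' x y hxy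

lemma IsPotential.smul {d p : X → K} (hp : IsPotential σ d p) (c : K) :
    IsPotential σ (c • d) (c • p) := by
  intro x y hxy
  simp only [Pi.smul_apply, smul_eq_mul]
  linear_combination c * hp x y hxy

lemma ConnectedPoset.eq_of_covBy {A : Type*} [AddCommGroup A] (hconn : ConnectedPoset X)
    {p q : X → A} (hpq : ∀ a b, a ⋖ b → p a - p b = q a - q b) (u0 : X) (h0 : p u0 = q u0) :
    p = q := by
  funext z
  obtain ⟨u, m, hu, rfl, rfl⟩ := hconn u0 z
  suffices ∀ i ≤ m, p (u i) = q (u i) from this m le_rfl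
  intro i hi
  induction i with
  | zero => exact h0
  | succ i ih =>
    have ih := ih (by omega)
    rcases hu i (by omega) with h | h
    · have := hpq _ _ h
      rwa [ih, sub_right_inj] at this
    · have := hpq _ _ h
      rwa [ih, sub_left_inj] at this

lemma IsPotential.eq (hconn : ConnectedPoset X) {d p q : X → K} (hp : IsPotential σ d p)
    (hq : IsPotential σ d q) (u0 : X) (h0 : p u0 = q u0) : p = q :=
  hconn.eq_of_covBy (fun a b hab => by rw [hp a b hab.lt, hq a b hab.lt]) u0 h0

lemma ConstOnChains.isPotential_of_covBy [LocallyFiniteOrder X] (hchain : ConstOnChains σ)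
    {d p : X → K} (hcov : ∀ a b, a ⋖ b → p a - p b = sigVal σ a b * (d a - d b)) :
    IsPotential σ d p := by
  intro x y hxy
  induction hn : #(Icc x y) using Nat.strong_induction_on generalizing y with
  | _ n ih =>
  obtain ⟨z, hxz, hzy⟩ := exists_le_covBy_of_lt hxy
  rcases hxz.eq_or_lt with rfl | hxz
  · exact hcov _ _ hzy
  have hxz' := ih _ (hn ▸ card_lt_card (Icc_ssubset_Icc_right hxy.le le_rfl hzy.lt)) z hxz rfl
  have hzy' := hcov z y hzy
  rw [hchain.sigVal_left hxz hzy.le] at hxz'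
  rw [hchain.sigVal_right hxz.le hzy.lt] at hzy'
  linear_combination hxz' + hzy'

def sigValSymm (σ : LtPairs X → K) (a b : X) : K := sigVal σ a b + sigVal σ b a

lemma sigValSymm_of_lt {a b : X} (h : a < b) : sigValSymm σ a b = sigVal σ a b := by
  rw [sigValSymm, sigVal_of_not_lt h.not_gt, add_zero]

lemma walkSum_eq_zero_of_isCycleW (hcyc : ConstOnCycles σ) (d : X → K) {u : ℕ → X} {m : ℕ}
    (hu : IsCycleW u m) : walkSum (fun a b => sigValSymm σ a b * (d a - d b)) u m = 0 := by
  obtain ⟨k, hk⟩ := hcyc u m hu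
  have hconst : ∀ i ∈ range m, sigValSymm σ (u i) (u (i + 1)) * (d (u i) - d (u (i + 1)))
      = k * (d (u i) - d (u (i + 1))) := by
    intro i hi
    have hi := mem_range.1 hi
    congr 1
    rcases hu.1 i hi with h | h
    · rw [sigValSymm_of_lt h.lt, sigVal_of_lt h.lt, (hk i hi).1 h.lt]
    · rw [sigValSymm, add_comm, ← sigValSymm, sigValSymm_of_lt h.lt, sigVal_of_lt h.lt,
        (hk i hi).2 h.lt]
  rw [walkSum, sum_congr rfl hconst, ← mul_sum, sum_range_sub' (fun i => d (u i)), hu.2.1,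
    sub_self, mul_zero]

theorem exists_isPotential [LocallyFiniteOrder X] (hconn : ConnectedPoset X)
    (hchain : ConstOnChains σ) (hcyc : ConstOnCycles σ) (u0 : X) (d : X → K) :
    ∃ p : X → K, p u0 = 0 ∧ IsPotential σ d p := by
  obtain ⟨p, hp0, hp⟩ := exists_potential_of_walkSum hconn u0
    (E := fun a b => sigValSymm σ a b * (d a - d b))
    (fun a b => by simp only [sigValSymm]; ring) (fun u m => walkSum_eq_zero_of_isCycleW hcyc d)
  refine ⟨p, hp0, hchain.isPotential_of_covBy fun a b hab => ?_⟩
  rw [hp a b hab, sigValSymm_of_lt hab.lt]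

/-- Normalised potentials are unique, hence depend linearly on `d`. -/
theorem exists_linearMap_isPotential [LocallyFiniteOrder X] (hconn : ConnectedPoset X)
    (hchain : ConstOnChains σ) (hcyc : ConstOnCycles σ) (u0 : X) :
    ∃ P : (X → K) →ₗ[K] (X → K), ∀ d, P d u0 = 0 ∧ IsPotential σ d (P d) := by
  choose p hp0 hp using exists_isPotential hconn hchain hcyc u0
  refine ⟨{ toFun := p, map_add' := fun d d' => ?_, map_smul' := fun c d => ?_ },
    fun d => ⟨hp0 d, hp d⟩⟩
  · exact (hp _).eq hconn ((hp d).add (hp d')) u0 (by simp [hp0])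
  · exact (hp _).eq hconn ((hp d).smul c) u0 (by simp [hp0])

end Potential

section IncidenceAlgebra

open IncidenceAlgebra

lemma IncidenceAlgebra.sum_apply {𝕜 α ι : Type*} [AddCommMonoid 𝕜] [LE α] (s : Finset ι)
    (F : ι → IncidenceAlgebra 𝕜 α) (a b : α) : (∑ i ∈ s, F i) a b = ∑ i ∈ s, F i a b :=
  map_sum (⟨⟨fun f => f a b, rfl⟩, fun _ _ => rfl⟩ : IncidenceAlgebra 𝕜 α →+ 𝕜) F s

variable {K X : Type*} [Field K] [PartialOrder X]

def diagEntries : IncidenceAlgebra K X →ₗ[K] (X → K) where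
  toFun f z := f z z
  map_add' _ _ := rfl
  map_smul' _ _ := rfl

@[simp] lemma diagEntries_apply (f : IncidenceAlgebra K X) (z : X) : diagEntries f z = f z z :=
  rfl

variable [DecidableEq X]

@[simp] lemma eI_apply (x y : X) (h : x ≤ y) (u v : X) :
    eI K x y h u v = if x = u ∧ y = v then 1 else 0 := rfl

lemma eI_apply_self_of_lt {x y : X} (h : x < y) (z : X) : eI K x y h.le z z = 0 :=
  if_neg fun hz => h.ne (hz.1.trans hz.2.symm)

lemma isDiagI_eI_self (x : X) : IsDiagI (eI K x x le_rfl) := by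
  intro u v huv
  rw [eI_apply, if_neg]
  rintro ⟨rfl, rfl⟩
  exact huv rfl

lemma sum_smul_eI [Fintype X] (f : IncidenceAlgebra K X) :
    ∑ p : {p : X × X // p.1 ≤ p.2}, f p.1.1 p.1.2 • eI K p.1.1 p.1.2 p.2 = f := by
  ext u v huv
  rw [IncidenceAlgebra.sum_apply, sum_eq_single ⟨(u, v), huv⟩]
  · simp
  · rintro ⟨⟨x, y⟩, hxy⟩ - hne
    simp only [constSMul_apply, eI_apply, smul_eq_mul, mul_ite, mul_one, mul_zero,
      ite_eq_right_iff, and_imp]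
    rintro rfl rfl
    exact (hne rfl).elim
  · simp

lemma IncidenceAlgebra.linearMap_ext_eI [Fintype X] {M : Type*} [AddCommMonoid M] [Module K M]
    {φ ψ : IncidenceAlgebra K X →ₗ[K] M}
    (h : ∀ x y (hxy : x ≤ y), φ (eI K x y hxy) = ψ (eI K x y hxy)) : φ = ψ := by
  ext f
  rw [← sum_smul_eI f]
  simp only [map_sum, map_smul, h]

variable [LocallyFiniteOrder X]

lemma IncidenceAlgebra.lie_apply_eq_sub_mul {h : IncidenceAlgebra K X}
    (b : IncidenceAlgebra K X) {x y : X} (hxy : x ≤ y) (hrow : ∀ z, x < z → z ≤ y → h x z = 0)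
    (hcol : ∀ z, x ≤ z → z < y → h z y = 0) : ⁅h, b⁆ x y = (h x x - h y y) * b x y := by
  have hl : (h * b) x y = h x x * b x y := by
    rw [mul_apply, sum_eq_single_of_mem x (by simp [hxy])]
    intro z hz hzx
    rw [hrow z (lt_of_le_of_ne (mem_Icc.1 hz).1 (Ne.symm hzx)) (mem_Icc.1 hz).2, zero_mul]
  have hr : (b * h) x y = b x y * h y y := by
    rw [mul_apply, sum_eq_single_of_mem y (by simp [hxy])]
    intro z hz hzy
    rw [hcol z (mem_Icc.1 hz).1 (lt_of_le_of_ne (mem_Icc.1 hz).2 hzy), mul_zero]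
  rw [Ring.lie_def, sub_apply, hl, hr]
  ring

lemma IncidenceAlgebra.lie_apply_self (a b : IncidenceAlgebra K X) (x : X) : ⁅a, b⁆ x x = 0 := by
  rw [lie_apply_eq_sub_mul b le_rfl (fun z h h' => (h.not_ge h').elim)
    (fun z h h' => (h'.not_ge h).elim), sub_self, zero_mul]

lemma IsDiagI.lie_apply {a : IncidenceAlgebra K X} (ha : IsDiagI a) (b : IncidenceAlgebra K X)
    {x y : X} (hxy : x ≤ y) : ⁅a, b⁆ x y = (a x x - a y y) * b x y :=
  lie_apply_eq_sub_mul b hxy (fun z h _ => ha x z h.ne) (fun z _ h => ha z y h.ne)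

lemma IsDiagI.lie_eI {a : IncidenceAlgebra K X} (ha : IsDiagI a) {x y : X} (hxy : x ≤ y) :
    ⁅a, eI K x y hxy⁆ = (a x x - a y y) • eI K x y hxy := by
  ext u v huv
  rw [ha.lie_apply _ huv, constSMul_apply, smul_eq_mul, eI_apply]
  split_ifs with h
  · obtain ⟨rfl, rfl⟩ := h
    rfl
  · simp

end IncidenceAlgebra

section HalfDerivation

open IncidenceAlgebra (constSMul_apply)

variable {K X : Type*} [Field K] [PartialOrder X] [DecidableEq X] {σ : LtPairs X → K}

def halfDerivationOfPotential (σ : LtPairs X → K) (P : (X → K) →ₗ[K] (X → K)) :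
    IncidenceAlgebra K X →ₗ[K] IncidenceAlgebra K X where
  toFun f := ⟨fun x y => if x = y then P (diagEntries f) x else sigVal σ x y * f x y,
    fun x y hxy => by
      rw [if_neg (fun h => hxy h.le), IncidenceAlgebra.apply_eq_zero_of_not_le hxy, mul_zero]⟩
  map_add' f g := by
    ext x y _
    simp only [IncidenceAlgebra.coe_mk, map_add, IncidenceAlgebra.add_apply, Pi.add_apply]
    split_ifs <;> ring
  map_smul' c f := by
    ext x y _
    simp only [IncidenceAlgebra.coe_mk, map_smul, constSMul_apply, RingHom.id_apply,
      Pi.smul_apply, smul_eq_mul]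
    split_ifs <;> ring

variable {P : (X → K) →ₗ[K] (X → K)}

lemma halfDerivationOfPotential_apply_self (f : IncidenceAlgebra K X) (x : X) :
    halfDerivationOfPotential σ P f x x = P (diagEntries f) x :=
  if_pos rfl

lemma halfDerivationOfPotential_apply_of_ne (f : IncidenceAlgebra K X) {x y : X} (h : x ≠ y) :
    halfDerivationOfPotential σ P f x y = sigVal σ x y * f x y :=
  if_neg h

lemma halfDerivationOfPotential_eI (hP : P 0 = 0) {x y : X} (h : x < y) :
    halfDerivationOfPotential σ P (eI K x y h.le) = σ ⟨(x, y), h⟩ • eI K x y h.le := by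
  ext u v huv
  rw [constSMul_apply, smul_eq_mul]
  rcases huv.eq_or_lt with rfl | huv
  · have : diagEntries (eI K x y h.le) = 0 := funext (eI_apply_self_of_lt h)
    rw [halfDerivationOfPotential_apply_self, this, hP, eI_apply_self_of_lt h, mul_zero]
    rfl
  · rw [halfDerivationOfPotential_apply_of_ne _ huv.ne, eI_apply]
    split_ifs with he
    · obtain ⟨rfl, rfl⟩ := he
      rw [sigVal_of_lt h]
    · simp

lemma IsDiagI.halfDerivationOfPotential {f : IncidenceAlgebra K X} (hf : IsDiagI f) :
    IsDiagI (halfDerivationOfPotential σ P f) := by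
  intro x y hxy
  rw [halfDerivationOfPotential_apply_of_ne _ hxy, hf x y hxy, mul_zero]

variable [LocallyFiniteOrder X]

/-- As `σ` is constant on `[x, y]`, on the row and column of `[x, y]` that `⁅·, b⁆ x y` sees the
map differs from `σ(x,y) • a` only by a diagonal term with equal entries at `x` and `y`. -/
lemma halfDerivationOfPotential_lie_apply (hchain : ConstOnChains σ)
    (hP : ∀ d, IsPotential σ d (P d)) (a b : IncidenceAlgebra K X) {x y : X} (hxy : x < y) :
    ⁅halfDerivationOfPotential σ P a, b⁆ x y = sigVal σ x y * ⁅a, b⁆ x y := by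
  have hrest : ⁅halfDerivationOfPotential σ P a - sigVal σ x y • a, b⁆ x y = 0 := by
    rw [IncidenceAlgebra.lie_apply_eq_sub_mul b hxy.le]
    · have hpot := hP (diagEntries a) x y hxy
      simp only [diagEntries_apply] at hpot
      simp only [IncidenceAlgebra.sub_apply, constSMul_apply, smul_eq_mul,
        halfDerivationOfPotential_apply_self]
      linear_combination b x y * hpot
    · intro z hxz hzy
      rw [IncidenceAlgebra.sub_apply, halfDerivationOfPotential_apply_of_ne _ hxz.ne,
        constSMul_apply, hchain.sigVal_left hxz hzy, smul_eq_mul, sub_self]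
    · intro z hxz hzy
      rw [IncidenceAlgebra.sub_apply, halfDerivationOfPotential_apply_of_ne _ hzy.ne,
        constSMul_apply, hchain.sigVal_right hxz hzy, smul_eq_mul, sub_self]
  rwa [sub_lie, smul_lie, IncidenceAlgebra.sub_apply, constSMul_apply, smul_eq_mul,
    sub_eq_zero] at hrest

theorem isHalfDerivation_halfDerivationOfPotential [NeZero (2 : K)] (hchain : ConstOnChains σ)
    (hP : ∀ d, IsPotential σ d (P d)) :
    IsHalfDerivation K (IncidenceAlgebra K X) (halfDerivationOfPotential σ P) := by
  intro a b
  ext x y hxy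
  rw [constSMul_apply, IncidenceAlgebra.add_apply, smul_eq_mul]
  rcases hxy.eq_or_lt with rfl | hxy
  · have : diagEntries ⁅a, b⁆ = 0 := funext (IncidenceAlgebra.lie_apply_self a b)
    rw [halfDerivationOfPotential_apply_self, this, map_zero, IncidenceAlgebra.lie_apply_self,
      IncidenceAlgebra.lie_apply_self, add_zero, mul_zero]
    rfl
  · rw [← lie_skew a (halfDerivationOfPotential σ P b), IncidenceAlgebra.neg_apply,
      halfDerivationOfPotential_lie_apply hchain hP _ _ hxy,
      halfDerivationOfPotential_lie_apply hchain hP _ _ hxy,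
      halfDerivationOfPotential_apply_of_ne _ hxy.ne, ← lie_skew b a,
      IncidenceAlgebra.neg_apply]
    field_simp
    ring

lemma IsHalfDerivation.isPotential_diagEntries [NeZero (2 : K)]
    {ψ : IncidenceAlgebra K X →ₗ[K] IncidenceAlgebra K X}
    (hψ : IsHalfDerivation K (IncidenceAlgebra K X) ψ)
    (hoff : ∀ (x y : X) (h : x < y), ψ (eI K x y h.le) = σ ⟨(x, y), h⟩ • eI K x y h.le)
    {a : IncidenceAlgebra K X} (ha : IsDiagI a) (hψa : IsDiagI (ψ a)) :
    IsPotential σ (diagEntries a) (diagEntries (ψ a)) := by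
  intro x y hxy
  have h := hψ a (eI K x y hxy.le)
  rw [ha.lie_eI, map_smul, hoff x y hxy, lie_smul] at h
  have hxy' := congrArg (fun f => f x y) h
  simp only [constSMul_apply, IncidenceAlgebra.add_apply, hψa.lie_apply _ hxy.le,
    ha.lie_apply _ hxy.le, eI_apply, and_self, if_true, smul_eq_mul, mul_one] at hxy'
  rw [sigVal_of_lt hxy, diagEntries_apply, diagEntries_apply, diagEntries_apply,
    diagEntries_apply]
  field_simp at hxy'
  linear_combination -hxy'

theorem eq_halfDerivationOfPotential [Fintype X] [NeZero (2 : K)] (hconn : ConnectedPoset X)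
    (u0 : X) (hP : ∀ d, P d u0 = 0 ∧ IsPotential σ d (P d))
    {ψ : IncidenceAlgebra K X →ₗ[K] IncidenceAlgebra K X}
    (hψ : IsHalfDerivation K (IncidenceAlgebra K X) ψ)
    (hdiag : ∀ f : IncidenceAlgebra K X, IsDiagI f → IsDiagI (ψ f))
    (hoff : ∀ (x y : X) (h : x < y), ψ (eI K x y h.le) = σ ⟨(x, y), h⟩ • eI K x y h.le)
    (hnorm : ∀ x : X, ψ (eI K x x le_rfl) u0 u0 = 0) :
    ψ = halfDerivationOfPotential σ P := by
  refine IncidenceAlgebra.linearMap_ext_eI fun x y hxy => ?_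
  rcases hxy.eq_or_lt with rfl | hxy
  · have hdiagx := hdiag _ (isDiagI_eI_self x)
    have hpot : diagEntries (ψ (eI K x x le_rfl)) = P (diagEntries (eI K x x le_rfl)) :=
      (hψ.isPotential_diagEntries hoff (isDiagI_eI_self x) hdiagx).eq hconn (hP _).2 u0
        ((hnorm x).trans (hP _).1.symm)
    ext u v huv
    rcases huv.eq_or_lt with rfl | huv
    · rw [halfDerivationOfPotential_apply_self, ← hpot]
      rfl
    · rw [hdiagx u v huv.ne, halfDerivationOfPotential_apply_of_ne _ huv.ne,
        isDiagI_eI_self x u v huv.ne, mul_zero]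
  · rw [hoff x y hxy, halfDerivationOfPotential_eI (map_zero P)]

end HalfDerivation

/-- for `σ` constant on chains and cycles, there is a unique
diagonality-preserving `1/2`-derivation `φ` of `I(X,K)` with `φ e_{xy} = σ(x,y) e_{xy}`
for `x < y` and `φ(e_x)(u0, u0) = 0` for all `x`. -/
theorem statement15 (K X : Type*) [Field K] [CharZero K] [PartialOrder X] [Fintype X]
    [LocallyFiniteOrder X] [DecidableEq X] (hconn : ConnectedPoset X) (u0 : X)
    (σ : LtPairs X → K) (hchain : ConstOnChains σ) (hcyc : ConstOnCycles σ) :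
    ∃! φ : IncidenceAlgebra K X →ₗ[K] IncidenceAlgebra K X,
      IsHalfDerivation K (IncidenceAlgebra K X) φ ∧
      (∀ f : IncidenceAlgebra K X, IsDiagI f → IsDiagI (φ f)) ∧
      (∀ (x y : X) (h : x < y), φ (eI K x y h.le) = σ ⟨(x, y), h⟩ • eI K x y h.le) ∧
      (∀ x : X, φ (eI K x x le_rfl) u0 u0 = 0) := by
  obtain ⟨P, hP⟩ := exists_linearMap_isPotential hconn hchain hcyc u0
  refine ⟨halfDerivationOfPotential σ P,
    ⟨isHalfDerivation_halfDerivationOfPotential hchain fun d => (hP d).2,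
      fun f hf => hf.halfDerivationOfPotential,
      fun x y h => halfDerivationOfPotential_eI (map_zero P) h,
      fun x => by rw [halfDerivationOfPotential_apply_self, (hP _).1]⟩,
    fun ψ ⟨hψ, hdiag, hoff, hnorm⟩ => eq_halfDerivationOfPotential hconn u0 hP hψ hdiag hoff hnorm⟩
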